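/- arXiv:2010.00465 — 4 statements merged into one kernel-verified Lean document; each statement's English description precedes it below -/
import Mathlib

section
/- Let A be an n×n complex matrix and let M be the 2n×2n block matrix [[0, I], [−A², 0]]. Then exp(tM) = [[cos(tA), s], [−A·sin(tA), cos(tA)]], where s equals the power series t·Σ_{k≥0} (−1)^k (t²A²)^k/(2k+1)! (i.e., s·A = sin(tA) when A is invertible). -/
open NormedSpace

/-- Matrix cosine, defined by its power series. -/
noncomputable def mcos {n : Type*} [Fintype n] [DecidableEq n] (A : Matrix n n ℂ) :
    Matrix n n ℂ :=
  ∑' k : ℕ, ((-1 : ℂ) ^ k / (2 * k).factorial) • A ^ (2 * k)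

/-- Matrix sine, defined by its power series. -/
noncomputable def msin {n : Type*} [Fintype n] [DecidableEq n] (A : Matrix n n ℂ) :
    Matrix n n ℂ :=
  ∑' k : ℕ, ((-1 : ℂ) ^ k / (2 * k + 1).factorial) • A ^ (2 * k + 1)

/-- The entry `s(t,A) = t ∑_{k≥0} (-1)^k (t²A²)^k/(2k+1)!`. -/
noncomputable def sFun {n : Type*} [Fintype n] [DecidableEq n] (t : ℝ) (A : Matrix n n ℂ) :
    Matrix n n ℂ :=
  ∑' k : ℕ, ((-1 : ℂ) ^ k * (t : ℂ) ^ (2 * k + 1) / (2 * k + 1).factorial) • A ^ (2 * k)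

/-
Since `M² = fromBlocks (-A²) 0 0 (-A²)`, the even powers of `tM` are block diagonal and the odd
ones are `(tM)^(2k) * tM`. Splitting the exponential series into its even and odd parts therefore
gives, block by block, the series of `cos (tA)`, of `s(t,A)` and of `-A² s(t,A) = -A sin (tA)`.
Each of these converges, being a block of a subseries of the convergent series of `exp (tM)`.
-/
open scoped Nat

namespace Matrix

variable {α ι l m n o : Type*}

section Summation

variable [AddCommMonoid α] [TopologicalSpace α]

theorem hasSum_iff_forall_apply {F : ι → Matrix m n α} {X : Matrix m n α} :
    HasSum F X ↔ ∀ i j, HasSum (fun k => F k i j) (X i j) :=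
  Pi.hasSum.trans (forall_congr' fun _ => Pi.hasSum)

variable {a : ι → Matrix n l α} {b : ι → Matrix n m α} {c : ι → Matrix o l α}
  {d : ι → Matrix o m α}

theorem hasSum_fromBlocks_iff {A : Matrix n l α} {B : Matrix n m α} {C : Matrix o l α}
    {D : Matrix o m α} :
    HasSum (fun i => fromBlocks (a i) (b i) (c i) (d i)) (fromBlocks A B C D) ↔
      HasSum a A ∧ HasSum b B ∧ HasSum c C ∧ HasSum d D := by
  simp only [hasSum_iff_forall_apply, Sum.forall, forall_and, fromBlocks_apply₁₁,
    fromBlocks_apply₁₂, fromBlocks_apply₂₁, fromBlocks_apply₂₂]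
  tauto

theorem summable_fromBlocks_iff :
    Summable (fun i => fromBlocks (a i) (b i) (c i) (d i)) ↔
      Summable a ∧ Summable b ∧ Summable c ∧ Summable d := by
  constructor
  · rintro ⟨X, hX⟩
    rw [← fromBlocks_toBlocks X, hasSum_fromBlocks_iff] at hX
    exact ⟨hX.1.summable, hX.2.1.summable, hX.2.2.1.summable, hX.2.2.2.summable⟩
  · rintro ⟨⟨A, hA⟩, ⟨B, hB⟩, ⟨C, hC⟩, ⟨D, hD⟩⟩
    exact ⟨_, hasSum_fromBlocks_iff.2 ⟨hA, hB, hC, hD⟩⟩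

end Summation

section Powers

variable [Ring α] [Fintype n] [DecidableEq n]

theorem fromBlocks_zero_one_pow_two_mul (B : Matrix n n α) (k : ℕ) :
    fromBlocks 0 1 B 0 ^ (2 * k) = fromBlocks (B ^ k) 0 0 (B ^ k) := by
  have hsq : fromBlocks 0 1 B 0 ^ 2 = fromBlocks B 0 0 B := by
    simp [sq, fromBlocks_multiply]
  rw [pow_mul, hsq, fromBlocks_diagonal_pow]

theorem fromBlocks_zero_one_pow_two_mul_add_one (B : Matrix n n α) (k : ℕ) :
    fromBlocks 0 1 B 0 ^ (2 * k + 1) = fromBlocks 0 (B ^ k) (B * B ^ k) 0 := by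
  rw [pow_succ, fromBlocks_zero_one_pow_two_mul, fromBlocks_multiply, ← pow_succ, pow_succ']
  simp

end Powers

section Exponential

variable {𝕂 : Type*} [RCLike 𝕂] [Fintype n] [DecidableEq n]

theorem hasSum_expSeries (X : Matrix n n 𝕂) :
    HasSum (fun m => ((m ! : 𝕂)⁻¹) • X ^ m) (exp X) :=
  open scoped Norms.Operator in exp_series_hasSum_exp' X

/- With `B = -A²`, these are the terms of the series of `cos (t A)` and of `sin (t A) A⁻¹`. -/
noncomputable def cosTerm (B : Matrix n n 𝕂) (t : 𝕂) (k : ℕ) : Matrix n n 𝕂 :=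
  (((2 * k) ! : 𝕂)⁻¹ * t ^ (2 * k)) • B ^ k

noncomputable def sinTerm (B : Matrix n n 𝕂) (t : 𝕂) (k : ℕ) : Matrix n n 𝕂 :=
  (((2 * k + 1) ! : 𝕂)⁻¹ * t ^ (2 * k + 1)) • B ^ k

variable (B : Matrix n n 𝕂) (t : 𝕂)

theorem expSeries_fromBlocks_zero_one_two_mul (k : ℕ) :
    (((2 * k) ! : 𝕂)⁻¹) • (t • fromBlocks 0 1 B 0) ^ (2 * k) =
      fromBlocks (cosTerm B t k) 0 0 (cosTerm B t k) := by
  rw [smul_pow, fromBlocks_zero_one_pow_two_mul, smul_smul, fromBlocks_smul]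
  simp [cosTerm]

theorem expSeries_fromBlocks_zero_one_two_mul_add_one (k : ℕ) :
    (((2 * k + 1) ! : 𝕂)⁻¹) • (t • fromBlocks 0 1 B 0) ^ (2 * k + 1) =
      fromBlocks 0 (sinTerm B t k) (B * sinTerm B t k) 0 := by
  rw [smul_pow, fromBlocks_zero_one_pow_two_mul_add_one, smul_smul, fromBlocks_smul]
  simp [sinTerm]

theorem summable_cosTerm : Summable (cosTerm B t) := by
  have h := (hasSum_expSeries (t • fromBlocks 0 1 B 0)).summable.comp_injective
    (mul_right_injective₀ two_ne_zero)
  exact (summable_fromBlocks_iff.1 (h.congr (expSeries_fromBlocks_zero_one_two_mul B t))).1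

theorem summable_sinTerm : Summable (sinTerm B t) := by
  have h := (hasSum_expSeries (t • fromBlocks 0 1 B 0)).summable.comp_injective
    (add_left_injective 1 |>.comp (mul_right_injective₀ two_ne_zero))
  exact (summable_fromBlocks_iff.1
    (h.congr (expSeries_fromBlocks_zero_one_two_mul_add_one B t))).2.1

theorem exp_smul_fromBlocks_zero_one :
    exp (t • fromBlocks 0 1 B 0) =
      fromBlocks (∑' k, cosTerm B t k) (∑' k, sinTerm B t k) (B * ∑' k, sinTerm B t k)
        (∑' k, cosTerm B t k) := by
  have hcos := (summable_cosTerm B t).hasSum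
  have hsin := (summable_sinTerm B t).hasSum
  have heven := (hasSum_fromBlocks_iff.2 ⟨hcos, hasSum_zero, hasSum_zero, hcos⟩).congr_fun
    (expSeries_fromBlocks_zero_one_two_mul B t)
  have hodd :=
    (hasSum_fromBlocks_iff.2 ⟨hasSum_zero, hsin, hsin.mul_left B, hasSum_zero⟩).congr_fun
      (expSeries_fromBlocks_zero_one_two_mul_add_one B t)
  have hexp := HasSum.even_add_odd
    (f := fun m => ((m ! : 𝕂)⁻¹) • (t • fromBlocks 0 1 B 0) ^ m) heven hodd
  rw [(hasSum_expSeries _).unique hexp, fromBlocks_add]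
  simp

end Exponential

end Matrix

theorem neg_sq_pow_eq_smul (𝕂 : Type*) {R : Type*} [CommRing 𝕂] [Ring R] [Algebra 𝕂 R]
    (a : R) (k : ℕ) : (-(a ^ 2)) ^ k = ((-1 : 𝕂) ^ k) • a ^ (2 * k) := by
  rw [← neg_one_smul 𝕂 (a ^ 2), smul_pow, ← pow_mul]

section Complex

open Matrix

variable {n : Type*} [Fintype n] [DecidableEq n]

theorem mcos_smul_eq_tsum_cosTerm (A : Matrix n n ℂ) (t : ℂ) :
    mcos (t • A) = ∑' k, cosTerm (-(A ^ 2)) t k := by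
  refine tsum_congr fun k => ?_
  rw [cosTerm, neg_sq_pow_eq_smul ℂ, smul_pow, smul_smul, smul_smul]
  congr 1
  ring

theorem sFun_eq_tsum_sinTerm (t : ℝ) (A : Matrix n n ℂ) :
    sFun t A = ∑' k, sinTerm (-(A ^ 2)) (t : ℂ) k := by
  refine tsum_congr fun k => ?_
  rw [sinTerm, neg_sq_pow_eq_smul ℂ, smul_smul]
  congr 1
  ring

theorem msin_smul_eq_mul_sFun (t : ℝ) (A : Matrix n n ℂ) :
    msin ((t : ℂ) • A) = A * sFun t A := by
  rw [sFun_eq_tsum_sinTerm, ← (summable_sinTerm (-(A ^ 2)) (t : ℂ)).tsum_mul_left A]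
  refine tsum_congr fun k => ?_
  rw [sinTerm, neg_sq_pow_eq_smul ℂ, smul_smul, mul_smul_comm, ← pow_succ', smul_pow, smul_smul]
  congr 1
  ring

end Complex

/-- For `M = [[0, I], [-A², 0]]` one has
`exp (tM) = [[cos (tA), s(t,A²-series)], [-A sin(tA), cos (tA)]]`. -/
theorem exp_block_matrix {n : Type*} [Fintype n] [DecidableEq n] (A : Matrix n n ℂ) (t : ℝ) :
    exp ((t : ℂ) • Matrix.fromBlocks (0 : Matrix n n ℂ) (1 : Matrix n n ℂ) (-(A ^ 2)) 0) =
      Matrix.fromBlocks (mcos ((t : ℂ) • A)) (sFun t A)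
        (-(A * msin ((t : ℂ) • A))) (mcos ((t : ℂ) • A)) := by
  rw [Matrix.exp_smul_fromBlocks_zero_one, ← mcos_smul_eq_tsum_cosTerm, ← sFun_eq_tsum_sinTerm,
    msin_smul_eq_mul_sFun, neg_mul, sq, mul_assoc]
end

section
/- The polynomial A⁷ (the seventh power of a matrix A) cannot in general be computed by a scheme using only three matrix products of the form: A₂ = A², A₄ = (linear comb. of I, A, A₂)·(linear comb. of I, A, A₂), A₈ = (linear comb. of I, A, A₂, A₄)·(linear comb. of I, A, A₂, A₄), with the result a linear combination of I, A, A₂, A₄, A₈. That is, no choice of scalar coefficients makes this expression equal to A⁷ for all matrices A (equivalently, as a polynomial identity in a commuting indeterminate). -/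
set_option maxHeartbeats 2000000


open Polynomial

/-- `x⁷` cannot be produced by the three-product scheme
`p₂ = x²`, `p₄ = (lin. comb.)·(lin. comb.)`, `p₈ = (lin. comb.)·(lin. comb.)`,
output a linear combination of `1, x, p₂, p₄, p₈`. -/
theorem x_pow_seven_not_three_products :
    ¬ ∃ a₀ a₁ a₂ b₀ b₁ b₂ c₀ c₁ c₂ c₃ d₀ d₁ d₂ d₃ e₀ e₁ e₂ e₃ e₄ : ℝ,
      (C e₀ + C e₁ * X + C e₂ * (X ^ 2) +
        C e₃ * ((C a₀ + C a₁ * X + C a₂ * X ^ 2) * (C b₀ + C b₁ * X + C b₂ * X ^ 2)) +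
        C e₄ *
          ((C c₀ + C c₁ * X + C c₂ * X ^ 2 +
              C c₃ * ((C a₀ + C a₁ * X + C a₂ * X ^ 2) * (C b₀ + C b₁ * X + C b₂ * X ^ 2))) *
            (C d₀ + C d₁ * X + C d₂ * X ^ 2 +
              C d₃ * ((C a₀ + C a₁ * X + C a₂ * X ^ 2) * (C b₀ + C b₁ * X + C b₂ * X ^ 2)))) :
        Polynomial ℝ) = X ^ 7 := by
  rintro ⟨a₀, a₁, a₂, b₀, b₁, b₂, c₀, c₁, c₂, c₃, d₀, d₁, d₂, d₃, e₀, e₁, e₂, e₃, e₄, h⟩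
  have h' : (C (e₀ + e₃*a₀*b₀ + e₄*c₀*d₀ + e₄*c₀*d₃*a₀*b₀ + e₄*c₃*a₀*b₀*d₀ + e₄*c₃*a₀*b₀*d₃*a₀*b₀) +
      C (e₁ + e₃*a₀*b₁ + e₃*a₁*b₀ + e₄*c₀*d₁ + e₄*c₀*d₃*a₀*b₁ + e₄*c₀*d₃*a₁*b₀ + e₄*c₃*a₀*b₀*d₁ + e₄*c₃*a₀*b₀*d₃*a₀*b₁ + e₄*c₃*a₀*b₀*d₃*a₁*b₀ + e₄*c₁*d₀ + e₄*c₁*d₃*a₀*b₀ + e₄*c₃*a₀*b₁*d₀ + e₄*c₃*a₀*b₁*d₃*a₀*b₀ + e₄*c₃*a₁*b₀*d₀ + e₄*c₃*a₁*b₀*d₃*a₀*b₀) * X +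
      C (e₂ + e₃*a₀*b₂ + e₃*a₁*b₁ + e₃*a₂*b₀ + e₄*c₀*d₂ + e₄*c₀*d₃*a₀*b₂ + e₄*c₀*d₃*a₁*b₁ + e₄*c₀*d₃*a₂*b₀ + e₄*c₃*a₀*b₀*d₂ + e₄*c₃*a₀*b₀*d₃*a₀*b₂ + e₄*c₃*a₀*b₀*d₃*a₁*b₁ + e₄*c₃*a₀*b₀*d₃*a₂*b₀ + e₄*c₁*d₁ + e₄*c₁*d₃*a₀*b₁ + e₄*c₁*d₃*a₁*b₀ + e₄*c₃*a₀*b₁*d₁ + e₄*c₃*a₀*b₁*d₃*a₀*b₁ + e₄*c₃*a₀*b₁*d₃*a₁*b₀ + e₄*c₃*a₁*b₀*d₁ + e₄*c₃*a₁*b₀*d₃*a₀*b₁ + e₄*c₃*a₁*b₀*d₃*a₁*b₀ + e₄*c₂*d₀ + e₄*c₂*d₃*a₀*b₀ + e₄*c₃*a₀*b₂*d₀ + e₄*c₃*a₀*b₂*d₃*a₀*b₀ + e₄*c₃*a₁*b₁*d₀ + e₄*c₃*a₁*b₁*d₃*a₀*b₀ + e₄*c₃*a₂*b₀*d₀ +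 e₄*c₃*a₂*b₀*d₃*a₀*b₀) * X ^ 2 +
      C (e₃*a₁*b₂ + e₃*a₂*b₁ + e₄*c₀*d₃*a₁*b₂ + e₄*c₀*d₃*a₂*b₁ + e₄*c₃*a₀*b₀*d₃*a₁*b₂ + e₄*c₃*a₀*b₀*d₃*a₂*b₁ + e₄*c₁*d₂ + e₄*c₁*d₃*a₀*b₂ + e₄*c₁*d₃*a₁*b₁ + e₄*c₁*d₃*a₂*b₀ + e₄*c₃*a₀*b₁*d₂ + e₄*c₃*a₀*b₁*d₃*a₀*b₂ + e₄*c₃*a₀*b₁*d₃*a₁*b₁ + e₄*c₃*a₀*b₁*d₃*a₂*b₀ + e₄*c₃*a₁*b₀*d₂ + e₄*c₃*a₁*b₀*d₃*a₀*b₂ + e₄*c₃*a₁*b₀*d₃*a₁*b₁ + e₄*c₃*a₁*b₀*d₃*a₂*b₀ + e₄*c₂*d₁ + e₄*c₂*d₃*a₀*b₁ + e₄*c₂*d₃*a₁*b₀ + e₄*c₃*a₀*b₂*d₁ + e₄*c₃*a₀*b₂*d₃*a₀*b₁ + e₄*c₃*a₀*b₂*d₃*a₁*b₀ + e₄*c₃*a₁*b₁*d₁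 + e₄*c₃*a₁*b₁*d₃*a₀*b₁ + e₄*c₃*a₁*b₁*d₃*a₁*b₀ + e₄*c₃*a₂*b₀*d₁ + e₄*c₃*a₂*b₀*d₃*a₀*b₁ + e₄*c₃*a₂*b₀*d₃*a₁*b₀ + e₄*c₃*a₁*b₂*d₀ + e₄*c₃*a₁*b₂*d₃*a₀*b₀ + e₄*c₃*a₂*b₁*d₀ + e₄*c₃*a₂*b₁*d₃*a₀*b₀) * X ^ 3 +
      C (e₃*a₂*b₂ + e₄*c₀*d₃*a₂*b₂ + e₄*c₃*a₀*b₀*d₃*a₂*b₂ + e₄*c₁*d₃*a₁*b₂ + e₄*c₁*d₃*a₂*b₁ + e₄*c₃*a₀*b₁*d₃*a₁*b₂ + e₄*c₃*a₀*b₁*d₃*a₂*b₁ + e₄*c₃*a₁*b₀*d₃*a₁*b₂ + e₄*c₃*a₁*b₀*d₃*a₂*b₁ + e₄*c₂*d₂ + e₄*c₂*d₃*a₀*b₂ + e₄*c₂*d₃*a₁*b₁ + e₄*c₂*d₃*a₂*b₀ + e₄*c₃*a₀*b₂*d₂ + e₄*c₃*a₀*b₂*d₃*a₀*b₂ + e₄*c₃*a₀*b₂*d₃*a₁*b₁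 + e₄*c₃*a₀*b₂*d₃*a₂*b₀ + e₄*c₃*a₁*b₁*d₂ + e₄*c₃*a₁*b₁*d₃*a₀*b₂ + e₄*c₃*a₁*b₁*d₃*a₁*b₁ + e₄*c₃*a₁*b₁*d₃*a₂*b₀ + e₄*c₃*a₂*b₀*d₂ + e₄*c₃*a₂*b₀*d₃*a₀*b₂ + e₄*c₃*a₂*b₀*d₃*a₁*b₁ + e₄*c₃*a₂*b₀*d₃*a₂*b₀ + e₄*c₃*a₁*b₂*d₁ + e₄*c₃*a₁*b₂*d₃*a₀*b₁ + e₄*c₃*a₁*b₂*d₃*a₁*b₀ + e₄*c₃*a₂*b₁*d₁ + e₄*c₃*a₂*b₁*d₃*a₀*b₁ + e₄*c₃*a₂*b₁*d₃*a₁*b₀ + e₄*c₃*a₂*b₂*d₀ + e₄*c₃*a₂*b₂*d₃*a₀*b₀) * X ^ 4 +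
      C (e₄*c₁*d₃*a₂*b₂ + e₄*c₃*a₀*b₁*d₃*a₂*b₂ + e₄*c₃*a₁*b₀*d₃*a₂*b₂ + e₄*c₂*d₃*a₁*b₂ + e₄*c₂*d₃*a₂*b₁ + e₄*c₃*a₀*b₂*d₃*a₁*b₂ + e₄*c₃*a₀*b₂*d₃*a₂*b₁ + e₄*c₃*a₁*b₁*d₃*a₁*b₂ + e₄*c₃*a₁*b₁*d₃*a₂*b₁ + e₄*c₃*a₂*b₀*d₃*a₁*b₂ + e₄*c₃*a₂*b₀*d₃*a₂*b₁ + e₄*c₃*a₁*b₂*d₂ + e₄*c₃*a₁*b₂*d₃*a₀*b₂ + e₄*c₃*a₁*b₂*d₃*a₁*b₁ + e₄*c₃*a₁*b₂*d₃*a₂*b₀ + e₄*c₃*a₂*b₁*d₂ + e₄*c₃*a₂*b₁*d₃*a₀*b₂ + e₄*c₃*a₂*b₁*d₃*a₁*b₁ + e₄*c₃*a₂*b₁*d₃*a₂*b₀ + e₄*c₃*a₂*b₂*d₁ + e₄*c₃*a₂*b₂*d₃*a₀*b₁ + e₄*c₃*a₂*b₂*d₃*a₁*b₀) * X ^ 5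 +
      C (e₄*c₂*d₃*a₂*b₂ + e₄*c₃*a₀*b₂*d₃*a₂*b₂ + e₄*c₃*a₁*b₁*d₃*a₂*b₂ + e₄*c₃*a₂*b₀*d₃*a₂*b₂ + e₄*c₃*a₁*b₂*d₃*a₁*b₂ + e₄*c₃*a₁*b₂*d₃*a₂*b₁ + e₄*c₃*a₂*b₁*d₃*a₁*b₂ + e₄*c₃*a₂*b₁*d₃*a₂*b₁ + e₄*c₃*a₂*b₂*d₂ + e₄*c₃*a₂*b₂*d₃*a₀*b₂ + e₄*c₃*a₂*b₂*d₃*a₁*b₁ + e₄*c₃*a₂*b₂*d₃*a₂*b₀) * X ^ 6 +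
      C (e₄*c₃*a₁*b₂*d₃*a₂*b₂ + e₄*c₃*a₂*b₁*d₃*a₂*b₂ + e₄*c₃*a₂*b₂*d₃*a₁*b₂ + e₄*c₃*a₂*b₂*d₃*a₂*b₁) * X ^ 7 +
      C (e₄*c₃*a₂*b₂*d₃*a₂*b₂) * X ^ 8 : Polynomial ℝ) = X ^ 7 := by
    refine Eq.trans ?_ h
    simp only [map_add, map_mul]
    ring
  have h7 := congrArg (fun p : Polynomial ℝ => p.coeff 7) h'
  have h8 := congrArg (fun p : Polynomial ℝ => p.coeff 8) h'
  simp only [coeff_add, coeff_C_mul, coeff_X_pow, coeff_C, coeff_X] at h7 h8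
  norm_num [-mul_eq_zero] at h7 h8
  have : (1:ℝ) = 0 := by
    linear_combination (-(e₄*c₃*a₁*b₂*d₃*a₂*b₂ + e₄*c₃*a₂*b₁*d₃*a₂*b₂ + e₄*c₃*a₂*b₂*d₃*a₁*b₂ +
        e₄*c₃*a₂*b₂*d₃*a₂*b₁) - 1) * h7 + (4*e₄*c₃*d₃*(a₁*b₂+a₂*b₁)^2) * h8
  exact one_ne_zero this
end

section
/- There exist real coefficients x₁,…,x₈ (explicitly: x₁ = 7/500, x₂ = −7/60000, x₃ = (−1533 + 7√36681)/2500, x₄ = −5(124581 + 391√36681)/10594584, x₅ = 9775/10594584, x₆ = −5(1001 + √36681)/508540032, x₇ = 3125/889945056, x₈ = (1549211 + 3246√36681)/63063000) such that, setting A₂ = A², A₄ = A₂², A₈ = A₄(x₁A₂ + x₂A₄), A₁₆ = (x₃A₄ + A₈)(x₄I + x₅A₂ + x₆A₄ + x₇A₈), the matrix I − A₂/2 + x₈A₄ + A₁₆ equals the degree-16 Taylor polynomial Σ_{k=0}^{8} (−1)^k A^{2k}/(2k)! of cos(A), for every square real matrix A. -/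
open scoped BigOperators

noncomputable def r36681 : ℝ := Real.sqrt 36681
noncomputable def x1 : ℝ := 7 / 500
noncomputable def x2 : ℝ := -7 / 60000
noncomputable def x3 : ℝ := (-1533 + 7 * r36681) / 2500
noncomputable def x4 : ℝ := -5 * (124581 + 391 * r36681) / 10594584
noncomputable def x5 : ℝ := 9775 / 10594584
noncomputable def x6 : ℝ := -5 * (1001 + r36681) / 508540032
noncomputable def x7 : ℝ := 3125 / 889945056
noncomputable def x8 : ℝ := (1549211 + 3246 * r36681) / 63063000

/-- The four-product scheme `A₂ = A²`, `A₄ = A₂²`, `A₈ = A₄(x₁A₂ + x₂A₄)`,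
`A₁₆ = (x₃A₄ + A₈)(x₄I + x₅A₂ + x₆A₄ + x₇A₈)`, with the explicit coefficients above,
yields `I - A₂/2 + x₈A₄ + A₁₆` equal to the degree-16 Taylor polynomial of `cos`. -/
theorem taylor_cos_sixteen {n : Type*} [Fintype n] [DecidableEq n] (A : Matrix n n ℝ) :
    (1 : Matrix n n ℝ) - (1 / 2 : ℝ) • (A ^ 2) + x8 • ((A ^ 2) ^ 2) +
        (x3 • ((A ^ 2) ^ 2) + ((A ^ 2) ^ 2) * (x1 • (A ^ 2) + x2 • ((A ^ 2) ^ 2))) *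
          (x4 • (1 : Matrix n n ℝ) + x5 • (A ^ 2) + x6 • ((A ^ 2) ^ 2) +
            x7 • (((A ^ 2) ^ 2) * (x1 • (A ^ 2) + x2 • ((A ^ 2) ^ 2)))) =
      ∑ k ∈ Finset.range 9, ((-1 : ℝ) ^ k / (2 * k).factorial) • A ^ (2 * k) := by
  have hr : r36681 ^ 2 = 36681 := by
    simp [r36681, Real.sq_sqrt]
  simp only [Finset.sum_range_succ, Finset.range_zero, Finset.sum_empty]
  norm_num [Nat.factorial]
  simp only [smul_add, smul_smul, mul_add, add_mul, smul_mul_assoc, mul_smul_comm,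
    mul_one, one_mul, ← pow_add, ← pow_mul, x1, x2, x3, x4, x5, x6, x7, x8]
  norm_num
  match_scalars
  · ring
  · ring
  · linear_combination (-391/756756000 : ℝ) * hr
  · ring
  · linear_combination (-1/36324288000 : ℝ) * hr
  · ring
  · ring
  · ring
  · ring
end

section
/- If r(x) = p(x)/p(−x) approximates e^{x} to order n at 0 (i.e., p(x) − e^x p(−x) = O(x^{n+1})) with p having real coefficients, then the real part of r(ix) approximates cos(x) to order n and the imaginary part approximates sin(x) to order n, for real x near 0. -/
/-!
`F z = p z - exp z * p (-z)` is entire. An analytic function that is `O(x ^ (n + 1))` along the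
real axis has analytic order at least `n + 1` at `0`, so `F z = O(z ^ (n + 1))` on all of `ℂ`,
in particular at `z = I * x`. Dividing by `p (-I * x) → p 0 ≠ 0` gives
`r (I * x) - exp (I * x) = O(x ^ (n + 1))`, and `exp (I * x) = cos x + I * sin x`.
-/

open Polynomial Filter Asymptotics Topology

section AnalyticOrder

variable {𝕜 E : Type*} [NontriviallyNormedField 𝕜] [NormedAddCommGroup E] [NormedSpace 𝕜 E]
  {f : 𝕜 → E} {n : ℕ}

/-- If `f = z ^ m • g` with `g 0 ≠ 0` and `m < n`, then `f = O(z ^ n)` along `l` would force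
`g = O(z ^ (n - m)) → 0` along `l`. -/
theorem AnalyticAt.natCast_le_analyticOrderAt_of_isBigO (hf : AnalyticAt 𝕜 f 0)
    {l : Filter 𝕜} [l.NeBot] (hl : l ≤ 𝓝[≠] 0) (hO : f =O[l] fun z => z ^ n) :
    (n : ℕ∞) ≤ analyticOrderAt f 0 := by
  by_contra! hlt
  obtain ⟨m, hm⟩ := ENat.ne_top_iff_exists.mp hlt.ne_top
  have hmn : m < n := by exact_mod_cast hm ▸ hlt
  obtain ⟨g, hg, hg0, hfg⟩ := hf.analyticOrderAt_eq_natCast.mp hm.symm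
  have hl₀ : l ≤ 𝓝 0 := hl.trans nhdsWithin_le_nhds
  have hg_eq : (fun z => (z ^ m)⁻¹ • f z) =ᶠ[l] g := by
    filter_upwards [hl self_mem_nhdsWithin, hl₀ hfg] with z hz hfz
    rw [hfz, sub_zero, inv_smul_smul₀ (pow_ne_zero _ hz)]
  have hg_small : g =O[l] fun z => z ^ (n - m) := by
    refine (((isBigO_refl (fun z => (z ^ m)⁻¹) l).smul hO).congr' hg_eq ?_)
    filter_upwards [hl self_mem_nhdsWithin] with z hz
    rw [smul_eq_mul, pow_sub₀ _ hz hmn.le, mul_comm]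
  have hpow : Tendsto (fun z : 𝕜 => z ^ (n - m)) l (𝓝 0) := by
    simpa [zero_pow (Nat.sub_ne_zero_of_lt hmn)] using
      ((continuous_pow (n - m)).tendsto (0 : 𝕜)).mono_left hl₀
  exact hg0 (tendsto_nhds_unique (hg.continuousAt.tendsto.mono_left hl₀)
    (hg_small.trans_tendsto hpow))

theorem AnalyticAt.isBigO_pow_of_natCast_le_analyticOrderAt (hf : AnalyticAt 𝕜 f 0)
    (hn : (n : ℕ∞) ≤ analyticOrderAt f 0) : f =O[𝓝 0] fun z => z ^ n := by
  obtain ⟨g, hg, hfg⟩ := (natCast_le_analyticOrderAt hf).mp hn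
  refine ((isBigO_refl (fun z : 𝕜 => z ^ n) (𝓝 0)).smul
    (hg.continuousAt.isBigO_one 𝕜)).congr' ?_ (by simp)
  simpa [EventuallyEq, eq_comm] using hfg

end AnalyticOrder

theorem AnalyticAt.isBigO_pow_of_isBigO_pow_ofReal {E : Type*} [NormedAddCommGroup E]
    [NormedSpace ℂ E] {f : ℂ → E} (hf : AnalyticAt ℂ f 0) {n : ℕ}
    (hO : (fun x : ℝ => f x) =O[𝓝 0] fun x : ℝ => x ^ n) : f =O[𝓝 0] fun z => z ^ n := by
  have hmap : map ((↑) : ℝ → ℂ) (𝓝[≠] 0) ≤ 𝓝[≠] 0 :=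
    tendsto_nhdsWithin_iff.mpr
      ⟨(Complex.continuous_ofReal.tendsto' 0 0 (by simp)).mono_left nhdsWithin_le_nhds,
        eventually_nhdsWithin_of_forall fun x hx => by simpa using hx⟩
  refine hf.isBigO_pow_of_natCast_le_analyticOrderAt
    (hf.natCast_le_analyticOrderAt_of_isBigO hmap (isBigO_map.mpr ?_))
  exact (hO.mono nhdsWithin_le_nhds).trans (isBigO_of_le _ fun x => by simp)

theorem isBigO_div_sub_of_isBigO_sub_mul {α 𝕜 F : Type*} [NormedField 𝕜] [Norm F]
    {l : Filter α} {u v w : α → 𝕜} {g : α → F} {c : 𝕜} (hv : Tendsto v l (𝓝 c)) (hc : c ≠ 0)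
    (h : (fun x => u x - w x * v x) =O[l] g) : (fun x => u x / v x - w x) =O[l] g := by
  refine IsBigO.trans ?_ h
  refine ((isBigO_refl (fun x => u x - w x * v x) l).mul
    ((hv.inv₀ hc).isBigO_one 𝕜)).congr' ?_ (by simp)
  filter_upwards [hv.eventually_ne hc] with x hx
  field_simp

/-- If `r(x) = p(x)/p(-x)` approximates `e^x` to order `n` at `0`, then the real and
imaginary parts of `r(ix)` approximate `cos x` and `sin x` to order `n`. -/
theorem pade_cos_sin_order (p : Polynomial ℝ) (n : ℕ) (hp0 : p.eval 0 ≠ 0)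
    (h : (fun x : ℝ => p.eval x - Real.exp x * p.eval (-x)) =O[nhds 0]
      fun x : ℝ => x ^ (n + 1)) :
    ((fun x : ℝ =>
        (((p.map (algebraMap ℝ ℂ)).eval (Complex.I * x) /
            (p.map (algebraMap ℝ ℂ)).eval (-(Complex.I * x))).re - Real.cos x))
      =O[nhds 0] (fun x : ℝ => x ^ (n + 1))) ∧
    ((fun x : ℝ =>
        (((p.map (algebraMap ℝ ℂ)).eval (Complex.I * x) /
            (p.map (algebraMap ℝ ℂ)).eval (-(Complex.I * x))).im - Real.sin x))
      =O[nhds 0] (fun x : ℝ => x ^ (n + 1))) := by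
  set q := p.map (algebraMap ℝ ℂ)
  have hq (x : ℝ) : q.eval (x : ℂ) = p.eval x := by
    rw [eval_map_algebraMap]
    exact aeval_algebraMap_apply_eq_algebraMap_eval x p
  have hF : (fun z => q.eval z - Complex.exp z * q.eval (-z)) =O[𝓝 0]
      fun z => z ^ (n + 1) := by
    refine AnalyticAt.isBigO_pow_of_isBigO_pow_ofReal
      (Differentiable.analyticAt (by fun_prop) 0) ?_
    simpa [← Complex.ofReal_neg, hq] using (Complex.ofRealCLM.isBigO_comp _ _).trans h
  have hI : Tendsto (fun x : ℝ => Complex.I * x) (𝓝 0) (𝓝 0) := by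
    simpa using (by fun_prop : Continuous fun x : ℝ => Complex.I * x).tendsto 0
  have hden : Tendsto (fun x : ℝ => q.eval (-(Complex.I * x))) (𝓝 0)
      (𝓝 ((p.eval 0 : ℝ) : ℂ)) := by
    simpa [← hq] using
      (by fun_prop : Continuous fun x : ℝ => q.eval (-(Complex.I * x))).tendsto 0
  have hr : (fun x : ℝ => q.eval (Complex.I * x) / q.eval (-(Complex.I * x))
      - Complex.exp (Complex.I * x)) =O[𝓝 0] fun x : ℝ => x ^ (n + 1) :=
    isBigO_div_sub_of_isBigO_sub_mul hden (by exact_mod_cast hp0)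
      ((hF.comp_tendsto hI).trans (isBigO_of_le _ fun x => by simp))
  constructor
  · refine (Complex.reCLM.isBigO_comp _ _).trans hr |>.congr_left fun x => ?_
    simp [mul_comm Complex.I, Complex.exp_ofReal_mul_I_re]
  · refine (Complex.imCLM.isBigO_comp _ _).trans hr |>.congr_left fun x => ?_
    simp [mul_comm Complex.I, Complex.exp_ofReal_mul_I_im]
end
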